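/- Let s > 0 and let U = ℝ² ∖ ((−∞, 0] × {0}). Define u₁(x) = exp(−s√(x₁ + i x₂)) (principal branch square root) and u₂(x) = i u₁(x) for x = (x₁, x₂) ∈ U. Then on U one has ∂₁u₁ + ∂₂u₂ = 0 and Δu₁ = Δu₂ = 0; consequently, for any real constants λ, μ, the vector field u₀ = (u₁, u₂) satisfies the Lamé system μ Δu₀ + (λ + μ) ∇(∇·u₀) = 0 componentwise on U. -/

import Mathlib

/-- First partial derivative (in the `x₁`-direction) of a complex-valued function on `ℝ²`. -/
noncomputable def pd1 (f : ℝ × ℝ → ℂ) (x : ℝ × ℝ) : ℂ :=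
  fderiv ℝ f x (1, 0)

/-- Second partial derivative (in the `x₂`-direction) of a complex-valued function on `ℝ²`. -/
noncomputable def pd2 (f : ℝ × ℝ → ℂ) (x : ℝ × ℝ) : ℂ :=
  fderiv ℝ f x (0, 1)

/-- Laplacian `Δ = ∂₁² + ∂₂²` of a complex-valued function on `ℝ²`. -/
noncomputable def lap (f : ℝ × ℝ → ℂ) (x : ℝ × ℝ) : ℂ :=
  pd1 (pd1 f) x + pd2 (pd2 f) x

/-- First component `u₁(x) = exp(-s √(x₁ + i x₂))` of the CGO solution
(principal branch square root). -/
noncomputable def cgoU1 (s : ℝ) (x : ℝ × ℝ) : ℂ :=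
  Complex.exp (-(s : ℂ) * ((x.1 : ℂ) + (x.2 : ℂ) * Complex.I) ^ (1/2 : ℂ))

/-- Second component `u₂ = i u₁` of the CGO solution. -/
noncomputable def cgoU2 (s : ℝ) (x : ℝ × ℝ) : ℂ :=
  Complex.I * cgoU1 s x

/-!
Let `ι x = x₁ + i x₂` (`equivRealProdCLM.symm`). Both components are holomorphic functions
composed with `ι`: `u₁ = g ∘ ι` and `u₂ = (i g) ∘ ι` with `g z = exp (-s √z)` holomorphic on the
slit plane. For holomorphic `g` the chain rule gives `∂₁ (g ∘ ι) = g' ∘ ι` and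
`∂₂ (g ∘ ι) = i g' ∘ ι`, so `Δ (g ∘ ι) = (1 + i²) g'' ∘ ι = 0` and
`∂₁ (g ∘ ι) + ∂₂ ((i g) ∘ ι) = (1 + i²) g' ∘ ι = 0`. The divergence vanishes on an open set,
hence so does its gradient, and both terms of the Lamé operator are zero.
-/

open Complex Filter Topology

theorem Filter.EventuallyEq.pd1_eq {f g : ℝ × ℝ → ℂ} {x : ℝ × ℝ} (h : f =ᶠ[𝓝 x] g) :
    pd1 f x = pd1 g x := by
  rw [pd1, pd1, h.fderiv_eq]

theorem Filter.EventuallyEq.pd2_eq {f g : ℝ × ℝ → ℂ} {x : ℝ × ℝ} (h : f =ᶠ[𝓝 x] g) :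
    pd2 f x = pd2 g x := by
  rw [pd2, pd2, h.fderiv_eq]

theorem pd1_zero (x : ℝ × ℝ) : pd1 0 x = 0 := by simp [pd1]

theorem pd2_zero (x : ℝ × ℝ) : pd2 0 x = 0 := by simp [pd2]

theorem fderiv_comp_equivRealProdCLM_symm_apply {g : ℂ → ℂ} {g' : ℂ} {x : ℝ × ℝ}
    (hg : HasDerivAt g g' (equivRealProdCLM.symm x)) (v : ℝ × ℝ) :
    fderiv ℝ (g ∘ equivRealProdCLM.symm) x v = equivRealProdCLM.symm v * g' := by
  rw [((hg.hasFDerivAt.restrictScalars ℝ).comp x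
    equivRealProdCLM.symm.hasFDerivAt).fderiv]
  simp

theorem pd1_comp_equivRealProdCLM_symm {g : ℂ → ℂ} {g' : ℂ} {x : ℝ × ℝ}
    (hg : HasDerivAt g g' (equivRealProdCLM.symm x)) :
    pd1 (g ∘ equivRealProdCLM.symm) x = g' := by
  simp [pd1, fderiv_comp_equivRealProdCLM_symm_apply hg, equivRealProdCLM_symm_apply]

theorem pd2_comp_equivRealProdCLM_symm {g : ℂ → ℂ} {g' : ℂ} {x : ℝ × ℝ}
    (hg : HasDerivAt g g' (equivRealProdCLM.symm x)) :
    pd2 (g ∘ equivRealProdCLM.symm) x = I * g' := by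
  simp [pd2, fderiv_comp_equivRealProdCLM_symm_apply hg, equivRealProdCLM_symm_apply]

section Holomorphic

variable {g : ℂ → ℂ} {S : Set ℂ} {x : ℝ × ℝ}

theorem eventually_equivRealProdCLM_symm_mem (hS : IsOpen S)
    (hx : equivRealProdCLM.symm x ∈ S) : ∀ᶠ y in 𝓝 x, equivRealProdCLM.symm y ∈ S :=
  equivRealProdCLM.symm.continuous.continuousAt.preimage_mem_nhds (hS.mem_nhds hx)

theorem pd1_comp_equivRealProdCLM_symm_eventuallyEq (hg : DifferentiableOn ℂ g S) (hS : IsOpen S)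
    (hx : equivRealProdCLM.symm x ∈ S) :
    pd1 (g ∘ equivRealProdCLM.symm) =ᶠ[𝓝 x] deriv g ∘ equivRealProdCLM.symm := by
  filter_upwards [eventually_equivRealProdCLM_symm_mem hS hx] with y hy
  exact pd1_comp_equivRealProdCLM_symm ((hg.differentiableAt (hS.mem_nhds hy)).hasDerivAt)

theorem pd2_comp_equivRealProdCLM_symm_eventuallyEq (hg : DifferentiableOn ℂ g S) (hS : IsOpen S)
    (hx : equivRealProdCLM.symm x ∈ S) :
    pd2 (g ∘ equivRealProdCLM.symm) =ᶠ[𝓝 x]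
      (fun z => I * deriv g z) ∘ equivRealProdCLM.symm := by
  filter_upwards [eventually_equivRealProdCLM_symm_mem hS hx] with y hy
  exact pd2_comp_equivRealProdCLM_symm ((hg.differentiableAt (hS.mem_nhds hy)).hasDerivAt)

theorem lap_comp_equivRealProdCLM_symm_eq_zero (hg : DifferentiableOn ℂ g S) (hS : IsOpen S)
    (hx : equivRealProdCLM.symm x ∈ S) : lap (g ∘ equivRealProdCLM.symm) x = 0 := by
  have hg'' : HasDerivAt (deriv g) (deriv (deriv g) (equivRealProdCLM.symm x))
      (equivRealProdCLM.symm x) :=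
    ((hg.deriv hS).differentiableAt (hS.mem_nhds hx)).hasDerivAt
  rw [lap, (pd1_comp_equivRealProdCLM_symm_eventuallyEq hg hS hx).pd1_eq,
    (pd2_comp_equivRealProdCLM_symm_eventuallyEq hg hS hx).pd2_eq,
    pd1_comp_equivRealProdCLM_symm hg'', pd2_comp_equivRealProdCLM_symm (hg''.const_mul I)]
  linear_combination deriv (deriv g) (equivRealProdCLM.symm x) * I_mul_I

theorem divergence_comp_equivRealProdCLM_symm_eventuallyEq_zero (hg : DifferentiableOn ℂ g S)
    (hS : IsOpen S) (hx : equivRealProdCLM.symm x ∈ S) :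
    (fun y => pd1 (g ∘ equivRealProdCLM.symm) y +
      pd2 ((fun z => I * g z) ∘ equivRealProdCLM.symm) y) =ᶠ[𝓝 x] 0 := by
  filter_upwards [eventually_equivRealProdCLM_symm_mem hS hx] with y hy
  have hg' := (hg.differentiableAt (hS.mem_nhds hy)).hasDerivAt
  rw [Pi.zero_apply, pd1_comp_equivRealProdCLM_symm hg',
    pd2_comp_equivRealProdCLM_symm (hg'.const_mul I)]
  linear_combination deriv g (equivRealProdCLM.symm y) * I_mul_I

end Holomorphic

noncomputable def cgoProfile (s : ℝ) (z : ℂ) : ℂ := exp (-(s : ℂ) * z ^ (1 / 2 : ℂ))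

theorem differentiableOn_cgoProfile (s : ℝ) : DifferentiableOn ℂ (cgoProfile s) slitPlane :=
  ((differentiableOn_id.cpow_const fun _ hz => hz).const_mul _).cexp

theorem differentiableOn_I_mul_cgoProfile (s : ℝ) :
    DifferentiableOn ℂ (fun z => I * cgoProfile s z) slitPlane :=
  (differentiableOn_cgoProfile s).const_mul I

theorem cgoU1_eq_comp (s : ℝ) : cgoU1 s = cgoProfile s ∘ equivRealProdCLM.symm := by
  ext x; simp [cgoU1, cgoProfile, equivRealProdCLM_symm_apply]

theorem cgoU2_eq_comp (s : ℝ) :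
    cgoU2 s = (fun z => I * cgoProfile s z) ∘ equivRealProdCLM.symm := by
  ext x; simp [cgoU2, cgoU1_eq_comp]

theorem equivRealProdCLM_symm_mem_slitPlane {x : ℝ × ℝ} :
    equivRealProdCLM.symm x ∈ slitPlane ↔ 0 < x.1 ∨ x.2 ≠ 0 := by
  simp [mem_slitPlane_iff]

theorem cgo_solves_lame_general (s lam mu : ℝ) :
    ∀ x : ℝ × ℝ, (0 < x.1 ∨ x.2 ≠ 0) →
      pd1 (cgoU1 s) x + pd2 (cgoU2 s) x = 0 ∧
      lap (cgoU1 s) x = 0 ∧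
      lap (cgoU2 s) x = 0 ∧
      (mu : ℂ) * lap (cgoU1 s) x +
        ((lam : ℂ) + (mu : ℂ)) * pd1 (fun y => pd1 (cgoU1 s) y + pd2 (cgoU2 s) y) x = 0 ∧
      (mu : ℂ) * lap (cgoU2 s) x +
        ((lam : ℂ) + (mu : ℂ)) * pd2 (fun y => pd1 (cgoU1 s) y + pd2 (cgoU2 s) y) x = 0 := by
  intro x hx
  rw [← equivRealProdCLM_symm_mem_slitPlane] at hx
  rw [cgoU1_eq_comp, cgoU2_eq_comp]
  have hdiv := divergence_comp_equivRealProdCLM_symm_eventuallyEq_zero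
    (differentiableOn_cgoProfile s) isOpen_slitPlane hx
  have hlap1 := lap_comp_equivRealProdCLM_symm_eq_zero
    (differentiableOn_cgoProfile s) isOpen_slitPlane hx
  have hlap2 := lap_comp_equivRealProdCLM_symm_eq_zero
    (differentiableOn_I_mul_cgoProfile s) isOpen_slitPlane hx
  refine ⟨hdiv.eq_of_nhds, hlap1, hlap2, ?_, ?_⟩
  · rw [hlap1, hdiv.pd1_eq, pd1_zero]; ring
  · rw [hlap2, hdiv.pd2_eq, pd2_zero]; ring

/-- on `U = ℝ² ∖ ((-∞,0] × {0})` one has `∂₁u₁ + ∂₂u₂ = 0` and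
`Δu₁ = Δu₂ = 0`; consequently, for any real `λ, μ`, the CGO field `u₀ = (u₁, u₂)`
satisfies the Lamé system `μ Δu₀ + (λ+μ) ∇(∇·u₀) = 0` componentwise on `U`. -/
theorem cgo_solves_lame (s lam mu : ℝ) (hs : 0 < s) :
    ∀ x : ℝ × ℝ, (0 < x.1 ∨ x.2 ≠ 0) →
      pd1 (cgoU1 s) x + pd2 (cgoU2 s) x = 0 ∧
      lap (cgoU1 s) x = 0 ∧
      lap (cgoU2 s) x = 0 ∧
      (mu : ℂ) * lap (cgoU1 s) x +
        ((lam : ℂ) + (mu : ℂ)) * pd1 (fun y => pd1 (cgoU1 s) y + pd2 (cgoU2 s) y) x = 0 ∧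
      (mu : ℂ) * lap (cgoU2 s) x +
        ((lam : ℂ) + (mu : ℂ)) * pd2 (fun y => pd1 (cgoU1 s) y + pd2 (cgoU2 s) y) x = 0 :=
  cgo_solves_lame_general s lam mu
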